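/- Let 1 ≤ p < ∞ and let φ : ℕ → (0,∞) (viewed as a function of 2N+1) be such that there exist constants C₁ > 0 with φ(2M+1) ≥ C₁ φ(2N+1) for all M ≤ N, and C₂ > 0 with (2M+1)^{1/p} φ(2M+1) ≤ C₂ (2N+1)^{1/p} φ(2N+1) for all M ≤ N. Fix m₀ ∈ ℤ and N₀ ∈ ℕ, and let ξ^{m₀,N₀} be the characteristic sequence of S_{m₀,N₀} (equal to 1 on S_{m₀,N₀} and 0 elsewhere). Then 1/φ(2N₀+1) ≤ ‖ξ^{m₀,N₀}‖_{ℓ^p_φ} ≤ max{1/C₁, C₂}/φ(2N₀+1); in particular there is a constant C > 0 independent of m₀ and N₀ with 1/φ(2N₀+1) ≤ ‖ξ^{m₀,N₀}‖_{ℓ^p_φ} ≤ C/φ(2N₀+1). -/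

import Mathlib

open scoped ENNReal NNReal BigOperators

/-- The discrete "ball" `S_{m,N} = {m-N, …, m+N}` as a finite set of integers. -/
noncomputable def S (m : ℤ) (N : ℕ) : Finset ℤ := Finset.Icc (m - N) (m + N)

/-- The generalized discrete Morrey norm `‖x‖_{ℓ^p_φ}`. -/
noncomputable def gMorreyNorm (p : ℝ) (φ : ℕ → ℝ) (x : ℤ → ℂ) : ℝ≥0∞ :=
  ⨆ (m : ℤ) (N : ℕ),
    (ENNReal.ofReal (φ (2 * N + 1)))⁻¹ *
      ((2 * (N : ℝ≥0∞) + 1)⁻¹ * ∑ k ∈ S m N, (‖x k‖₊ : ℝ≥0∞) ^ p) ^ (1 / p)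

/-!
Only the balls meeting `S_{m₀,N₀}` contribute, and there the average of `|ξ|^p` is
`#(S_{m,N} ∩ S_{m₀,N₀}) / (2N+1)`. The ball `S_{m₀,N₀}` itself gives the lower bound. For a
smaller ball the average is at most `1` and almost decreasingness bounds `1/φ(2N+1)` by
`1/(C₁ φ(2N₀+1))`; for a larger ball the intersection has at most `2N₀+1` points and almost
increasingness of `(2N+1)^{1/p} φ(2N+1)` gives the bound `C₂/φ(2N₀+1)`.
-/

lemma card_S (m : ℤ) (N : ℕ) : (S m N).card = 2 * N + 1 := by
  rw [S, Int.card_Icc]; omega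

noncomputable def morreyTerm (p : ℝ) (φ : ℕ → ℝ) (x : ℤ → ℂ) (m : ℤ) (N : ℕ) : ℝ≥0∞ :=
  (ENNReal.ofReal (φ (2 * N + 1)))⁻¹ *
    ((2 * (N : ℝ≥0∞) + 1)⁻¹ * ∑ k ∈ S m N, (‖x k‖₊ : ℝ≥0∞) ^ p) ^ (1 / p)

lemma gMorreyNorm_eq_iSup_morreyTerm (p : ℝ) (φ : ℕ → ℝ) (x : ℤ → ℂ) :
    gMorreyNorm p φ x = ⨆ (m : ℤ) (N : ℕ), morreyTerm p φ x m N := rfl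

lemma sum_nnnorm_rpow_of_eq_indicator {ι : Type*} [DecidableEq ι] {p : ℝ} (hp : 0 < p)
    {s t : Finset ι} {x : ι → ℂ} (hx : ∀ k, x k = if k ∈ t then 1 else 0) :
    ∑ k ∈ s, (‖x k‖₊ : ℝ≥0∞) ^ p = ((s ∩ t).card : ℝ≥0∞) := by
  have hterm : ∀ k, (‖x k‖₊ : ℝ≥0∞) ^ p = if k ∈ t then 1 else 0 := by
    intro k; rw [hx k]; split <;> simp [ENNReal.zero_rpow_of_pos hp]
  simp_rw [hterm]
  rw [Finset.sum_ite_mem, Finset.sum_const, nsmul_eq_mul, mul_one]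

lemma morreyTerm_of_eq_indicator {p : ℝ} (hp : 0 < p) {φ : ℕ → ℝ} {m₀ : ℤ} {N₀ : ℕ}
    {ξ : ℤ → ℂ} (hξ : ∀ k, ξ k = if k ∈ S m₀ N₀ then 1 else 0) (m : ℤ) {N : ℕ}
    (hφ : 0 < φ (2 * N + 1)) :
    morreyTerm p φ ξ m N = ENNReal.ofReal
      ((φ (2 * N + 1))⁻¹ * ((S m N ∩ S m₀ N₀).card / (2 * (N : ℝ) + 1)) ^ (1 / p)) := by
  have havg : (2 * (N : ℝ≥0∞) + 1)⁻¹ * ((S m N ∩ S m₀ N₀).card : ℝ≥0∞)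
      = ENNReal.ofReal ((S m N ∩ S m₀ N₀).card / (2 * (N : ℝ) + 1)) := by
    rw [ENNReal.ofReal_div_of_pos (by positivity), ENNReal.ofReal_natCast,
      ENNReal.div_eq_inv_mul, show (2 * (N : ℝ) + 1) = ((2 * N + 1 : ℕ) : ℝ) by push_cast; ring,
      ENNReal.ofReal_natCast]
    push_cast; ring
  rw [morreyTerm, sum_nnnorm_rpow_of_eq_indicator hp hξ, havg,
    ENNReal.ofReal_rpow_of_nonneg (by positivity) (by positivity),
    ← ENNReal.ofReal_inv_of_pos hφ, ← ENNReal.ofReal_mul (by positivity)]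

section RealBounds

variable {p a b c φa φb : ℝ}

lemma inv_mul_rpow_div_le_of_le_of_almost_decreasing {C₁ : ℝ} (hp : 0 ≤ p) (hc : 0 ≤ c)
    (hca : c ≤ a) (hC₁ : 0 < C₁) (hφb : 0 < φb) (hdec : C₁ * φb ≤ φa) :
    φa⁻¹ * (c / a) ^ (1 / p) ≤ (1 / C₁) / φb := by
  have hratio : (c / a) ^ (1 / p) ≤ 1 :=
    Real.rpow_le_one (div_nonneg hc (hc.trans hca)) (div_le_one_of_le₀ hca (hc.trans hca))
      (by positivity)
  have hφa : 0 < φa := (mul_pos hC₁ hφb).trans_le hdec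
  calc φa⁻¹ * (c / a) ^ (1 / p) ≤ φa⁻¹ := mul_le_of_le_one_right (inv_pos.2 hφa).le hratio
    _ ≤ (C₁ * φb)⁻¹ := inv_anti₀ (by positivity) hdec
    _ = (1 / C₁) / φb := by rw [mul_inv, one_div, div_eq_mul_inv]

lemma inv_mul_rpow_div_le_of_le_of_almost_increasing {C₂ : ℝ} (hp : 0 ≤ p) (hc : 0 ≤ c)
    (hcb : c ≤ b) (ha : 0 < a) (hφa : 0 < φa) (hφb : 0 < φb)
    (hinc : b ^ (1 / p) * φb ≤ C₂ * (a ^ (1 / p) * φa)) :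
    φa⁻¹ * (c / a) ^ (1 / p) ≤ C₂ / φb := by
  calc φa⁻¹ * (c / a) ^ (1 / p) ≤ φa⁻¹ * (b / a) ^ (1 / p) := by gcongr
    _ = b ^ (1 / p) / (φa * a ^ (1 / p)) := by
        rw [Real.div_rpow (hc.trans hcb) ha.le, inv_mul_eq_div, div_div, mul_comm]
    _ ≤ C₂ / φb := by
        rw [div_le_div_iff₀ (by positivity) hφb]
        linarith

end RealBounds

theorem stmt11_general (p : ℝ) (hp : 1 ≤ p) (φ : ℕ → ℝ)
    (hφpos : ∀ N : ℕ, 0 < φ (2 * N + 1))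
    (C₁ : ℝ) (hC₁ : 0 < C₁)
    (hdec : ∀ M N : ℕ, M ≤ N → C₁ * φ (2 * N + 1) ≤ φ (2 * M + 1))
    (C₂ : ℝ)
    (hinc : ∀ M N : ℕ, M ≤ N →
      (2 * (M : ℝ) + 1) ^ (1 / p) * φ (2 * M + 1) ≤
        C₂ * ((2 * (N : ℝ) + 1) ^ (1 / p) * φ (2 * N + 1)))
    (m₀ : ℤ) (N₀ : ℕ) (ξ : ℤ → ℂ)
    (hξ : ∀ k : ℤ, ξ k = if k ∈ S m₀ N₀ then 1 else 0) :
    ENNReal.ofReal (1 / φ (2 * N₀ + 1)) ≤ gMorreyNorm p φ ξ ∧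
    gMorreyNorm p φ ξ ≤ ENNReal.ofReal (max (1 / C₁) C₂ / φ (2 * N₀ + 1)) := by
  have hp0 : 0 < p := by linarith
  rw [gMorreyNorm_eq_iSup_morreyTerm]
  refine ⟨?_, iSup₂_le fun m N => ?_⟩
  · calc ENNReal.ofReal (1 / φ (2 * N₀ + 1)) = morreyTerm p φ ξ m₀ N₀ := by
          rw [morreyTerm_of_eq_indicator hp0 hξ m₀ (hφpos N₀), Finset.inter_self, card_S,
            Nat.cast_add_one, Nat.cast_mul, Nat.cast_two, div_self (by positivity),
            Real.one_rpow, mul_one, one_div]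
      _ ≤ ⨆ (m : ℤ) (N : ℕ), morreyTerm p φ ξ m N := le_iSup₂ (f := morreyTerm p φ ξ) m₀ N₀
  · rw [morreyTerm_of_eq_indicator hp0 hξ m (hφpos N)]
    refine ENNReal.ofReal_le_ofReal ?_
    rcases le_total N N₀ with hN | hN
    · have hcard : ((S m N ∩ S m₀ N₀).card : ℝ) ≤ 2 * N + 1 := by
        exact_mod_cast card_S m N ▸ Finset.card_le_card Finset.inter_subset_left
      calc _ ≤ (1 / C₁) / φ (2 * N₀ + 1) :=
            inv_mul_rpow_div_le_of_le_of_almost_decreasing hp0.le (by positivity) hcard hC₁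
              (hφpos N₀) (hdec N N₀ hN)
        _ ≤ _ := by gcongr; exacts [(hφpos N₀).le, le_max_left _ _]
    · have hcard : ((S m N ∩ S m₀ N₀).card : ℝ) ≤ 2 * N₀ + 1 := by
        exact_mod_cast card_S m₀ N₀ ▸ Finset.card_le_card Finset.inter_subset_right
      calc _ ≤ C₂ / φ (2 * N₀ + 1) :=
            inv_mul_rpow_div_le_of_le_of_almost_increasing hp0.le (by positivity) hcard
              (by positivity) (hφpos N) (hφpos N₀) (hinc N₀ N hN)
        _ ≤ _ := by gcongr; exacts [(hφpos N₀).le, le_max_right _ _]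

theorem stmt11 (p : ℝ) (hp : 1 ≤ p) (φ : ℕ → ℝ)
    (hφpos : ∀ N : ℕ, 0 < φ (2 * N + 1))
    (C₁ : ℝ) (hC₁ : 0 < C₁)
    (hdec : ∀ M N : ℕ, M ≤ N → C₁ * φ (2 * N + 1) ≤ φ (2 * M + 1))
    (C₂ : ℝ) (hC₂ : 0 < C₂)
    (hinc : ∀ M N : ℕ, M ≤ N →
      (2 * (M : ℝ) + 1) ^ (1 / p) * φ (2 * M + 1) ≤
        C₂ * ((2 * (N : ℝ) + 1) ^ (1 / p) * φ (2 * N + 1)))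
    (m₀ : ℤ) (N₀ : ℕ) (ξ : ℤ → ℂ)
    (hξ : ∀ k : ℤ, ξ k = if k ∈ S m₀ N₀ then 1 else 0) :
    ENNReal.ofReal (1 / φ (2 * N₀ + 1)) ≤ gMorreyNorm p φ ξ ∧
    gMorreyNorm p φ ξ ≤ ENNReal.ofReal (max (1 / C₁) C₂ / φ (2 * N₀ + 1)) :=
  stmt11_general p hp φ hφpos C₁ hC₁ hdec C₂ hinc m₀ N₀ ξ hξ
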